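/- Let b = √(3/2) and consider the 3×3 complex matrices A₁ and A₂ defined so that A₁ᴴ is the real matrix with rows (-2, b, 0), (-b, 0, b), (0, -b, 2), and A₂ᴴ is the complex symmetric matrix with rows (-i, √2, 0), (√2, 0, √2), (0, √2, i), where ᴴ denotes conjugate transpose and i is the imaginary unit. Then there exists no positive-definite Hermitian 3×3 complex matrix Θ satisfying both A₁ᴴ Θ = Θ A₁ and A₂ᴴ Θ = Θ A₂. -/

import Mathlib

/-!
Quasi-Hermiticity with respect to a fixed metric `Θ` is preserved by real linear combinations,
so `A := √2 • A₁ - √(3/2) • A₂` would be quasi-Hermitian for a common metric. The first column of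
`A` vanishes off the diagonal, so its diagonal entry `-2√2 - √(3/2) i` would be an eigenvalue of
an operator that is self-adjoint for `⟪x, y⟫ = xᴴ Θ y`, yet it is not real.
-/

open scoped ComplexOrder
open Matrix Complex

namespace Matrix

variable {n : Type*} [Fintype n]

def IsQuasiHermitian (Θ A : Matrix n n ℂ) : Prop :=
  Θ.PosDef ∧ Aᴴ * Θ = Θ * A

namespace IsQuasiHermitian

variable {Θ A B : Matrix n n ℂ}

theorem add (hA : IsQuasiHermitian Θ A) (hB : IsQuasiHermitian Θ B) :
    IsQuasiHermitian Θ (A + B) :=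
  ⟨hA.1, by rw [conjTranspose_add, Matrix.add_mul, Matrix.mul_add, hA.2, hB.2]⟩

theorem smul (hA : IsQuasiHermitian Θ A) (r : ℝ) : IsQuasiHermitian Θ (r • A) :=
  ⟨hA.1, by rw [conjTranspose_smul, star_trivial, Matrix.smul_mul, Matrix.mul_smul, hA.2]⟩

theorem sub (hA : IsQuasiHermitian Θ A) (hB : IsQuasiHermitian Θ B) :
    IsQuasiHermitian Θ (A - B) := by
  simpa [sub_eq_add_neg] using hA.add (hB.smul (-1))

/-- The `(i, i)` entry of `Aᴴ Θ = Θ A` reads `conj a * Θᵢᵢ = Θᵢᵢ * a`, and `Θᵢᵢ > 0`. -/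
theorem im_apply_self_eq_zero (hA : IsQuasiHermitian Θ A) {i : n}
    (hcol : ∀ j, j ≠ i → A j i = 0) : (A i i).im = 0 := by
  have hii := congrFun (congrFun hA.2 i) i
  simp only [mul_apply, conjTranspose_apply] at hii
  rw [Finset.sum_eq_single i (fun j _ hj => by simp [hcol j hj]) (by simp),
    Finset.sum_eq_single i (fun j _ hj => by simp [hcol j hj]) (by simp)] at hii
  have hΘ : Θ i i ≠ 0 := hA.1.diag_pos.ne'
  have hconj : star (A i i) = A i i := mul_right_cancel₀ hΘ (by rw [hii, mul_comm])
  exact Complex.conj_eq_iff_im.mp hconj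

end IsQuasiHermitian

end Matrix

/-- The paper's example at `s = 1/2`, `a = 1/2`: the two candidates `A₁`
(with `A₁ᴴ` real asymmetric) and `A₂` (with `A₂ᴴ` complex symmetric) admit no
shared positive-definite Hermitian metric, i.e. they are incompatible. -/
theorem example_incompatible :
    ¬ ∃ Θ : Matrix (Fin 3) (Fin 3) ℂ, Θ.IsHermitian ∧ Θ.PosDef ∧
      ((!![(-2 : ℂ), (Real.sqrt (3/2) : ℂ), 0;
           -(Real.sqrt (3/2) : ℂ), 0, (Real.sqrt (3/2) : ℂ);
           0, -(Real.sqrt (3/2) : ℂ), 2])ᴴ)ᴴ * Θ =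
        Θ * (!![(-2 : ℂ), (Real.sqrt (3/2) : ℂ), 0;
                -(Real.sqrt (3/2) : ℂ), 0, (Real.sqrt (3/2) : ℂ);
                0, -(Real.sqrt (3/2) : ℂ), 2])ᴴ ∧
      ((!![-Complex.I, (Real.sqrt 2 : ℂ), 0;
           (Real.sqrt 2 : ℂ), 0, (Real.sqrt 2 : ℂ);
           0, (Real.sqrt 2 : ℂ), Complex.I])ᴴ)ᴴ * Θ =
        Θ * (!![-Complex.I, (Real.sqrt 2 : ℂ), 0;
                (Real.sqrt 2 : ℂ), 0, (Real.sqrt 2 : ℂ);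
                0, (Real.sqrt 2 : ℂ), Complex.I])ᴴ := by
  rintro ⟨Θ, -, hΘ, h₁, h₂⟩
  have hA := (IsQuasiHermitian.smul ⟨hΘ, h₁⟩ (Real.sqrt 2)).sub
    (IsQuasiHermitian.smul ⟨hΘ, h₂⟩ (Real.sqrt (3/2)))
  have him := hA.im_apply_self_eq_zero (i := 0) (by
    intro j hj
    fin_cases j
    · exact absurd rfl hj
    · simp [mul_comm]
    · simp)
  simp at him
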